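/- arXiv:2306.03580 — 3 statements merged into one kernel-verified Lean document; each statement's English description precedes it below -/
import Mathlib

section
/- Let p and q be probability density functions on ℝ^m, and let d* be the optimal Bayes class-probability function d*(θ) = p(θ)/(p(θ)+q(θ)) if p(θ)+q(θ) > 0 and d*(θ) = 1/2 otherwise. Define the population MSE statistic t_MSE = (1/2)∫_{ℝ^m} (d*(θ) − 1/2)² (p(θ) + q(θ)) dλ(θ). Then t_MSE = 0 if and only if p = q λ-almost everywhere on ℝ^m. -/
open MeasureTheory

/-- For probability densities `p` (class 1) and `q` (class 0) on ℝ^m and the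
optimal Bayes class-probability function `d⋆`, the population MSE statistic
`t_MSE = (1/2)∫ (d⋆(θ) - 1/2)² (p(θ) + q(θ)) dλ(θ)` vanishes iff `p = q` λ-a.e. -/
theorem lc2st_tMSE_eq_zero_iff_ae_eq
    (m : ℕ) (hm : 0 < m)
    (p q : EuclideanSpace ℝ (Fin m) → ℝ)
    (hp_meas : Measurable p) (hq_meas : Measurable q)
    (hp_nonneg : ∀ θ, 0 ≤ p θ) (hq_nonneg : ∀ θ, 0 ≤ q θ)
    (hp_int : ∫ θ, p θ = 1) (hq_int : ∫ θ, q θ = 1)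
    (dstar : EuclideanSpace ℝ (Fin m) → ℝ)
    (hdstar : ∀ θ, dstar θ = if 0 < p θ + q θ then p θ / (p θ + q θ) else 1 / 2) :
    (1 / 2) * (∫ θ, (dstar θ - 1 / 2) ^ 2 * (p θ + q θ)) = 0 ↔ p =ᵐ[volume] q := by
  set f : EuclideanSpace ℝ (Fin m) → ℝ := fun θ => (dstar θ - 1 / 2) ^ 2 * (p θ + q θ)
    with hf
  -- pointwise characterization
  have hpt : ∀ θ, f θ = 0 ↔ p θ = q θ := by
    intro θ
    by_cases h : 0 < p θ + q θ
    · have hne : p θ + q θ ≠ 0 := ne_of_gt h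
      simp only [hf, hdstar θ, if_pos h]
      constructor
      · intro h0
        rcases mul_eq_zero.1 h0 with h1 | h1
        · have h2 : p θ / (p θ + q θ) - 1 / 2 = 0 := by
            exact pow_eq_zero_iff (by norm_num) |>.1 h1
          have : p θ / (p θ + q θ) = 1 / 2 := by linarith
          field_simp at this
          linarith
        · exact absurd h1 hne
      · intro h1
        have : p θ / (p θ + q θ) = 1 / 2 := by
          have hq0 : q θ ≠ 0 := by
            intro hz; rw [h1, hz] at h; simp at h
          rw [h1, div_eq_iff (by intro hz; exact hq0 (by linarith [add_self_eq_zero.mp hz] : q θ = 0) : q θ + q θ ≠ 0)]; ring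
        rw [this]; ring
    · have hpz : p θ = 0 := by
        have := hp_nonneg θ; have := hq_nonneg θ; linarith [not_lt.1 h]
      have hqz : q θ = 0 := by
        have := hp_nonneg θ; have := hq_nonneg θ; linarith [not_lt.1 h]
      simp [hf, hpz, hqz]
  have hfnn : ∀ θ, 0 ≤ f θ := by
    intro θ
    by_cases h : 0 < p θ + q θ
    · exact mul_nonneg (sq_nonneg _) (le_of_lt h)
    · have := hp_nonneg θ; have := hq_nonneg θ
      have : p θ + q θ = 0 := le_antisymm (not_lt.1 h) (by linarith)
      simp [hf, this]
  -- measurability of dstar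
  have hd_meas : Measurable dstar := by
    have : dstar = fun θ => if 0 < p θ + q θ then p θ / (p θ + q θ) else 1 / 2 :=
      funext hdstar
    rw [this]
    exact Measurable.ite (measurableSet_lt measurable_const (hp_meas.add hq_meas))
      (hp_meas.div (hp_meas.add hq_meas)) measurable_const
  have hf_meas : Measurable f := ((hd_meas.sub measurable_const).pow_const 2).mul
    (hp_meas.add hq_meas)
  -- integrability
  have hp_integrable : Integrable p := by
    by_contra h
    rw [integral_undef h] at hp_int; norm_num at hp_int
  have hq_integrable : Integrable q := by
    by_contra h
    rw [integral_undef h] at hq_int; norm_num at hq_int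
  have hbound : ∀ θ, ‖f θ‖ ≤ (1/4) * (p θ + q θ) := by
    intro θ
    rw [Real.norm_of_nonneg (hfnn θ)]
    by_cases h : 0 < p θ + q θ
    · have hd0 : 0 ≤ dstar θ := by
        rw [hdstar θ, if_pos h]; exact div_nonneg (hp_nonneg θ) (le_of_lt h)
      have hd1 : dstar θ ≤ 1 := by
        rw [hdstar θ, if_pos h]
        exact div_le_one_of_le₀ (by linarith [hq_nonneg θ]) (le_of_lt h)
      have hsq : (dstar θ - 1/2) ^ 2 ≤ 1/4 := by nlinarith
      exact mul_le_mul_of_nonneg_right hsq (le_of_lt h) |>.trans_eq rfl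
    · have := hp_nonneg θ; have := hq_nonneg θ
      have hz : p θ + q θ = 0 := le_antisymm (not_lt.1 h) (by linarith)
      simp [hf, hz]
  have hf_integrable : Integrable f := by
    apply Integrable.mono' ((hp_integrable.add hq_integrable).const_mul (1/4))
      hf_meas.aestronglyMeasurable
    exact Filter.Eventually.of_forall hbound
  have key : (∫ θ, f θ) = 0 ↔ f =ᵐ[volume] 0 :=
    integral_eq_zero_iff_of_nonneg (fun θ => hfnn θ) hf_integrable
  constructor
  · intro h0
    have h1 : (∫ θ, f θ) = 0 := by linarith [h0]
    have := key.1 h1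
    filter_upwards [this] with θ hθ
    exact (hpt θ).1 hθ
  · intro hpq
    have : f =ᵐ[volume] 0 := by
      filter_upwards [hpq] with θ hθ
      exact (hpt θ).2 hθ
    rw [key.2 this]; ring
end

section
/- Let p and q be probability density functions on ℝ^m, and let d* be the optimal Bayes class-probability function d*(θ) = p(θ)/(p(θ)+q(θ)) if p(θ)+q(θ) > 0 and d*(θ) = 1/2 otherwise. Define the single-class population MSE statistic t_MSE0 = ∫_{ℝ^m} (d*(θ) − 1/2)² q(θ) dλ(θ), which uses only the class-0 density q. Then t_MSE0 = 0 if and only if p = q λ-almost everywhere on ℝ^m. -/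
open MeasureTheory

/-- For probability densities `p` (class 1) and `q` (class 0) on ℝ^m and the
optimal Bayes class-probability function `d⋆`, the single-class population MSE statistic
`t_MSE0 = ∫ (d⋆(θ) - 1/2)² q(θ) dλ(θ)` vanishes iff `p = q` λ-a.e. -/
theorem lc2st_tMSE0_eq_zero_iff_ae_eq
    (m : ℕ) (hm : 0 < m)
    (p q : EuclideanSpace ℝ (Fin m) → ℝ)
    (hp_meas : Measurable p) (hq_meas : Measurable q)
    (hp_nonneg : ∀ θ, 0 ≤ p θ) (hq_nonneg : ∀ θ, 0 ≤ q θ)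
    (hp_int : ∫ θ, p θ = 1) (hq_int : ∫ θ, q θ = 1)
    (dstar : EuclideanSpace ℝ (Fin m) → ℝ)
    (hdstar : ∀ θ, dstar θ = if 0 < p θ + q θ then p θ / (p θ + q θ) else 1 / 2) :
    (∫ θ, (dstar θ - 1 / 2) ^ 2 * q θ) = 0 ↔ p =ᵐ[volume] q := by
  have hq_integ : Integrable q := integrable_of_integral_eq_one hq_int
  have hp_integ : Integrable p := integrable_of_integral_eq_one hp_int
  have hdm : Measurable dstar := by
    have : dstar = fun θ => if 0 < p θ + q θ then p θ / (p θ + q θ) else 1 / 2 :=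
      funext hdstar
    rw [this]
    exact Measurable.ite (measurableSet_lt measurable_const (hp_meas.add hq_meas))
      (hp_meas.div (hp_meas.add hq_meas)) measurable_const
  set f : EuclideanSpace ℝ (Fin m) → ℝ := fun θ => (dstar θ - 1 / 2) ^ 2 * q θ with hf
  have hfm : Measurable f := ((hdm.sub measurable_const).pow_const 2).mul hq_meas
  have hf_nonneg : ∀ θ, 0 ≤ f θ := fun θ => mul_nonneg (sq_nonneg _) (hq_nonneg θ)
  have hd_bound : ∀ θ, |dstar θ - 1 / 2| ≤ 1 / 2 := by
    intro θ
    rw [hdstar θ]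
    split_ifs with h
    · have h0 : 0 ≤ p θ / (p θ + q θ) := div_nonneg (hp_nonneg θ) h.le
      have h1 : p θ / (p θ + q θ) ≤ 1 :=
        div_le_one_of_le₀ (le_add_of_nonneg_right (hq_nonneg θ)) h.le
      rw [abs_le]; constructor <;> linarith
    · simp
  have hf_le : ∀ θ, f θ ≤ (1 / 4) * q θ := by
    intro θ
    have h2 : (dstar θ - 1 / 2) ^ 2 ≤ (1 / 2 : ℝ) ^ 2 := by
      rw [← sq_abs]
      exact pow_le_pow_left₀ (abs_nonneg _) (hd_bound θ) 2
    calc f θ ≤ (1 / 2 : ℝ) ^ 2 * q θ := mul_le_mul_of_nonneg_right h2 (hq_nonneg θ)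
      _ = (1 / 4) * q θ := by ring
  have hf_integ : Integrable f := by
    refine (hq_integ.const_mul (1 / 4)).mono' hfm.aestronglyMeasurable ?_
    filter_upwards with θ
    rw [Real.norm_eq_abs, abs_of_nonneg (hf_nonneg θ)]
    exact hf_le θ
  rw [integral_eq_zero_iff_of_nonneg hf_nonneg hf_integ]
  constructor
  · intro hae
    -- a.e., q θ = 0 or p θ = q θ
    have h1 : ∀ᵐ θ ∂(volume : Measure (EuclideanSpace ℝ (Fin m))),
        q θ = 0 ∨ p θ = q θ := by
      filter_upwards [hae] with θ hθ
      have hθ' : (dstar θ - 1 / 2) ^ 2 * q θ = 0 := hθ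
      rcases mul_eq_zero.mp hθ' with h | h
      · right
        have hd : dstar θ = 1 / 2 := by
          have := pow_eq_zero_iff (n := 2) (by norm_num) |>.mp h
          linarith
        rw [hdstar θ] at hd
        split_ifs at hd with hpos
        · have hne : p θ + q θ ≠ 0 := ne_of_gt hpos
          field_simp at hd
          linarith
        · have hp0 : p θ = 0 := by
            have := hp_nonneg θ; have := hq_nonneg θ
            push_neg at hpos; linarith
          have hq0 : q θ = 0 := by
            have := hp_nonneg θ; have := hq_nonneg θ
            push_neg at hpos; linarith
          rw [hp0, hq0]
      · left; exact h
    -- min p q = q a.e.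
    have hmin_eq_q : (fun θ => min (p θ) (q θ)) =ᵐ[volume] q := by
      filter_upwards [h1] with θ hθ
      rcases hθ with h | h
      · rw [h, min_eq_right (hp_nonneg θ)]
      · simp [h]
    have hmin_integ : Integrable (fun θ => min (p θ) (q θ)) :=
      hq_integ.mono' ((hp_meas.min hq_meas).aestronglyMeasurable)
        (by
          filter_upwards with θ
          rw [Real.norm_eq_abs, abs_of_nonneg (le_min (hp_nonneg θ) (hq_nonneg θ))]
          exact min_le_right _ _)
    have hmin_int : ∫ θ, min (p θ) (q θ) = 1 := by
      rw [integral_congr_ae hmin_eq_q]; exact hq_int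
    have hsub : ∫ θ, (p θ - min (p θ) (q θ)) = 0 := by
      rw [integral_sub hp_integ hmin_integ, hp_int, hmin_int]; ring
    have hsub_ae : (fun θ => p θ - min (p θ) (q θ)) =ᵐ[volume] 0 := by
      rw [← integral_eq_zero_iff_of_nonneg (fun θ => sub_nonneg.mpr (min_le_left _ _))
        (hp_integ.sub hmin_integ)]
      exact hsub
    filter_upwards [h1, hsub_ae] with θ hθ hθ'
    have hple : p θ = min (p θ) (q θ) := by
      have : p θ - min (p θ) (q θ) = 0 := hθ'
      linarith
    rcases hθ with h | h
    · have : p θ ≤ q θ := hple.le.trans (min_le_right _ _)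
      have := hp_nonneg θ
      rw [h]; linarith
    · exact h
  · intro hae
    filter_upwards [hae] with θ hθ
    have hd : dstar θ = 1 / 2 := by
      rw [hdstar θ]
      split_ifs with hpos
      · rw [hθ] at hpos ⊢
        have : q θ ≠ 0 := by intro h; rw [h] at hpos; linarith
        field_simp
        ring
      · rfl
    show (dstar θ - 1 / 2) ^ 2 * q θ = 0
    rw [hd]
    ring
end

section
/- There exist probability density functions p and q on ℝ such that the set {θ : p(θ) ≠ q(θ)} has strictly positive Lebesgue measure and yet the single-class accuracy of the optimal Bayes classifier is at chance level: ∫_{{θ : p(θ) ≤ q(θ)}} q(θ) dλ(θ) = 1/2. Hence single-class accuracy at chance level is not a sufficient condition for p = q almost everywhere. -/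
open MeasureTheory

/-- There exist probability densities `p` and `q` on ℝ with
`{θ | p θ ≠ q θ}` of strictly positive Lebesgue measure, yet the single-class accuracy of
the optimal Bayes classifier (which predicts class 0 exactly where `p θ ≤ q θ`) evaluated
on class-0 samples is at chance level: `∫_{p ≤ q} q dλ = 1/2`. Hence single-class accuracy
at chance level does not imply `p = q` a.e. -/
theorem lc2st_single_class_accuracy_not_sufficient :
    ∃ p q : ℝ → ℝ, Measurable p ∧ Measurable q ∧
      (∀ θ, 0 ≤ p θ) ∧ (∀ θ, 0 ≤ q θ) ∧
      (∫ θ, p θ = 1) ∧ (∫ θ, q θ = 1) ∧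
      0 < volume {θ | p θ ≠ q θ} ∧
      ∫ θ in {θ | p θ ≤ q θ}, q θ = 1 / 2 := by
  refine ⟨(Set.Ico (0:ℝ) (1/2)).indicator (fun _ => (2:ℝ)),
    (Set.Ico (0:ℝ) 1).indicator (fun _ => (1:ℝ)), ?_, ?_, ?_, ?_, ?_, ?_, ?_, ?_⟩
  · exact measurable_const.indicator measurableSet_Ico
  · exact measurable_const.indicator measurableSet_Ico
  · intro θ; exact Set.indicator_nonneg (fun _ _ => by norm_num) θ
  · intro θ; exact Set.indicator_nonneg (fun _ _ => by norm_num) θ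
  · rw [integral_indicator_const _ measurableSet_Ico, Real.volume_real_Ico]
    norm_num
  · rw [integral_indicator_const _ measurableSet_Ico, Real.volume_real_Ico]
    norm_num
  · have hsub : Set.Ico (0:ℝ) (1/2) ⊆
        {θ | (Set.Ico (0:ℝ) (1/2)).indicator (fun _ => (2:ℝ)) θ ≠
          (Set.Ico (0:ℝ) 1).indicator (fun _ => (1:ℝ)) θ} := by
      intro θ hθ
      have h1 : θ ∈ Set.Ico (0:ℝ) 1 := ⟨hθ.1, hθ.2.trans (by norm_num)⟩
      rw [Set.mem_setOf_eq, Set.indicator_of_mem hθ, Set.indicator_of_mem h1]; norm_num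
    calc (0:ENNReal) < volume (Set.Ico (0:ℝ) (1/2)) := by
            rw [Real.volume_Ico]; norm_num
      _ ≤ _ := measure_mono hsub
  · have hset : {θ | (Set.Ico (0:ℝ) (1/2)).indicator (fun _ => (2:ℝ)) θ ≤
        (Set.Ico (0:ℝ) 1).indicator (fun _ => (1:ℝ)) θ} = (Set.Ico (0:ℝ) (1/2))ᶜ := by
      ext θ
      simp only [Set.mem_setOf_eq, Set.mem_compl_iff]
      constructor
      · intro h hm
        have h1 : θ ∈ Set.Ico (0:ℝ) 1 := ⟨hm.1, hm.2.trans (by norm_num)⟩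
        rw [Set.indicator_of_mem hm, Set.indicator_of_mem h1] at h
        norm_num at h
      · intro h
        rw [Set.indicator_of_notMem h]
        exact Set.indicator_nonneg (fun _ _ => by norm_num) θ
    rw [hset, ← integral_indicator measurableSet_Ico.compl]
    have : (Set.Ico (0:ℝ) (1/2))ᶜ.indicator ((Set.Ico (0:ℝ) 1).indicator (fun _ => (1:ℝ)))
        = (Set.Ico (1/2:ℝ) 1).indicator (fun _ => (1:ℝ)) := by
      ext θ
      rw [Set.indicator_indicator]
      congr 1
      ext x
      simp only [Set.mem_inter_iff, Set.mem_compl_iff, Set.mem_Ico, not_and, not_lt]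
      constructor
      · rintro ⟨h1, h2, h3⟩; exact ⟨h1 h2, h3⟩
      · rintro ⟨h1, h2⟩; exact ⟨fun _ => h1, by linarith, h2⟩
    rw [this, integral_indicator_const _ measurableSet_Ico, Real.volume_real_Ico]
    norm_num
end
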